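/- For the explicit discretization z^{k+1} = z^k + ε(J∇H(z^k) + z⋆ − z^k) with 2ε = (L² + L/μ)⁻¹, one has H(z^{k+1}) ≤ (1 − ε·μ/L)·H(z^k), hence linear convergence H(z^k) ≤ (1 − ε·μ/L)^k·H(z^0). -/

import Mathlib

/-!
Along the step `d = J∇H(z) + z⋆ − z`, the Hamiltonian part is orthogonal to `∇H(z)`, so only the
damping `z⋆ − z` contributes to the first-order change of `H`, and strong convexity bounds that
contribution by `−ε (H(z) + μ‖z − z⋆‖²/2)`. The `L`-smoothness error `Lε²‖d‖²/2` is controlled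
through `‖d‖² ≤ 2‖∇H(z)‖² + 2‖z − z⋆‖² ≤ 4 (L + 1/μ) H(z)`, and the choice `2ε (L² + L/μ) = 1`
makes it exactly `ε H(z)`, cancelling the `−ε H(z)`. What remains, `−εμ‖z − z⋆‖²/2`, is at most
`−ε (μ/L) H(z)` because `H(z) ≤ L‖z − z⋆‖²/2`.
-/

open RealInnerProductSpace

/-- The standard symplectic matrix `J` on `ℝ^{2n}`: `J (x, p) = (p, -x)`. -/
def Jmap (n : ℕ) (v : EuclideanSpace ℝ (Fin n ⊕ Fin n)) :
    EuclideanSpace ℝ (Fin n ⊕ Fin n) :=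
  WithLp.toLp 2 (fun i => Sum.elim (fun a => v (Sum.inr a)) (fun a => -(v (Sum.inl a))) i)

open Set

section

variable {E : Type*} [NormedAddCommGroup E] [InnerProductSpace ℝ E] {f : E → ℝ}

theorem ConvexOn.apply_sub_le_of_hasFDerivAt {f' : E →L[ℝ] ℝ} {x : E}
    (hf : ConvexOn ℝ univ f) (hf' : HasFDerivAt f f' x) (y : E) :
    f' (y - x) ≤ f y - f x := by
  set line : ℝ →ᵃ[ℝ] E := AffineMap.lineMap x y
  have hline : ConvexOn ℝ univ (f ∘ line) := hf.comp_affineMap line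
  have hderiv : HasDerivAt (f ∘ line) (f' (y - x)) 0 :=
    hf'.comp_hasDerivAt_of_eq 0 AffineMap.hasDerivAt_lineMap (by simp [line])
  simpa [slope_def_field, line] using
    hline.le_slope_of_hasDerivAt (mem_univ 0) (mem_univ 1) zero_lt_one hderiv

variable [CompleteSpace E]

theorem StrongConvexOn.add_inner_add_le {μ : ℝ} (hf : StrongConvexOn univ μ f) {x g' : E}
    (hg : HasGradientAt f g' x) (y : E) :
    f x + ⟪g', y - x⟫ + μ / 2 * ‖y - x‖ ^ 2 ≤ f y := by
  have hderiv := hg.hasFDerivAt.sub ((hasStrictFDerivAt_norm_sq x).hasFDerivAt.const_mul (μ / 2))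
  have h := (strongConvexOn_iff_convex.1 hf).apply_sub_le_of_hasFDerivAt hderiv y
  simp only [sub_apply, smul_apply, InnerProductSpace.toDual_apply_apply, innerSL_apply_apply,
    smul_eq_mul, nsmul_eq_mul, Nat.cast_ofNat, inner_sub_right, real_inner_self_eq_norm_sq] at h
  rw [norm_sub_sq_real, inner_sub_right, real_inner_comm x y]
  linarith

theorem IsLocalMin.hasGradientAt_eq_zero {x g' : E} (h : IsLocalMin f x)
    (hf : HasGradientAt f g' x) : g' = 0 := by
  simpa using h.hasFDerivAt_eq_zero hf.hasFDerivAt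

variable {g : E → E} {L : ℝ}

theorem le_add_inner_add_of_lipschitzWith_gradient (hL : 0 ≤ L)
    (hg : ∀ w, HasGradientAt f (g w) w) (hLip : LipschitzWith L.toNNReal g) (x y : E) :
    f y ≤ f x + ⟪g x, y - x⟫ + L / 2 * ‖y - x‖ ^ 2 := by
  set line : ℝ →ᵃ[ℝ] E := AffineMap.lineMap x y
  have hφ : ∀ t, HasDerivAt (f ∘ line) ⟪g (line t), y - x⟫ t := fun t => by
    simpa using (hg (line t)).hasFDerivAt.comp_hasDerivAt t AffineMap.hasDerivAt_lineMap
  have hB : ∀ t : ℝ, HasDerivAt (fun t => f x + t * ⟪g x, y - x⟫ + L / 2 * t ^ 2 * ‖y - x‖ ^ 2)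
      (⟪g x, y - x⟫ + L * t * ‖y - x‖ ^ 2) t := fun t => by
    refine ((((hasDerivAt_id t).mul_const _).const_add (f x)).add
      (((hasDerivAt_pow 2 t).const_mul (L / 2)).mul_const (‖y - x‖ ^ 2))).congr_deriv ?_
    ring
  have hbound : ∀ t ∈ Ico (0 : ℝ) 1,
      ⟪g (line t), y - x⟫ ≤ ⟪g x, y - x⟫ + L * t * ‖y - x‖ ^ 2 := by
    intro t ht
    have hlip : ‖g (line t) - g x‖ ≤ L * (t * ‖y - x‖) := by
      have := hLip.dist_le_mul (line t) x
      rwa [Real.coe_toNNReal L hL, dist_lineMap_left, dist_eq_norm, dist_eq_norm',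
        Real.norm_of_nonneg ht.1] at this
    calc ⟪g (line t), y - x⟫ = ⟪g x, y - x⟫ + ⟪g (line t) - g x, y - x⟫ := by
          rw [inner_sub_left]; ring
      _ ≤ ⟪g x, y - x⟫ + ‖g (line t) - g x‖ * ‖y - x‖ := by
          gcongr; exact real_inner_le_norm _ _
      _ ≤ ⟪g x, y - x⟫ + L * (t * ‖y - x‖) * ‖y - x‖ := by gcongr
      _ = _ := by ring
  have := image_le_of_deriv_right_le_deriv_boundary
    (fun t _ => (hφ t).continuousAt.continuousWithinAt) (fun t _ => (hφ t).hasDerivWithinAt)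
    (by simp [line]) (fun t _ => (hB t).continuousAt.continuousWithinAt)
    (fun t _ => (hB t).hasDerivWithinAt) hbound (right_mem_Icc.2 zero_le_one)
  simpa [line] using this

theorem norm_sq_le_of_lipschitzWith_gradient {m : ℝ} (hL : 0 < L)
    (hg : ∀ w, HasGradientAt f (g w) w) (hLip : LipschitzWith L.toNNReal g)
    (hm : ∀ w, m ≤ f w) (x : E) :
    ‖g x‖ ^ 2 ≤ 2 * L * (f x - m) := by
  have h := le_add_inner_add_of_lipschitzWith_gradient hL.le hg hLip x (x - L⁻¹ • g x)
  rw [sub_sub_cancel_left, inner_neg_right, real_inner_smul_right, real_inner_self_eq_norm_sq,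
    norm_neg, norm_smul, Real.norm_of_nonneg (inv_nonneg.2 hL.le)] at h
  have hquad : L / 2 * (L⁻¹ * ‖g x‖) ^ 2 = L⁻¹ * ‖g x‖ ^ 2 / 2 := by
    field_simp
  have hdecrease : L⁻¹ * ‖g x‖ ^ 2 ≤ 2 * (f x - m) := by
    linarith [hm (x - L⁻¹ • g x)]
  calc ‖g x‖ ^ 2 = L * (L⁻¹ * ‖g x‖ ^ 2) := by field_simp
    _ ≤ L * (2 * (f x - m)) := by gcongr
    _ = 2 * L * (f x - m) := by ring

theorem norm_skew_step_sq_le {A : E → E} {μ : ℝ} {zstar : E} (hμ : 0 < μ) (hL : 0 < L)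
    (hsc : StrongConvexOn univ μ f) (hg : ∀ w, HasGradientAt f (g w) w)
    (hLip : LipschitzWith L.toNNReal g) (hA : ∀ v, ‖A v‖ ≤ ‖v‖)
    (hmin : f zstar = 0) (hnonneg : ∀ w, 0 ≤ f w) (x : E) :
    ‖A (g x) + zstar - x‖ ^ 2 ≤ 4 * (L + μ⁻¹) * f x := by
  have hgz : g zstar = 0 :=
    IsLocalMin.hasGradientAt_eq_zero (.of_forall fun w => hmin ▸ hnonneg w) (hg zstar)
  have hgrad : ‖g x‖ ^ 2 ≤ 2 * L * f x := by
    simpa using norm_sq_le_of_lipschitzWith_gradient hL hg hLip hnonneg x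
  have hgrowth : μ / 2 * ‖x - zstar‖ ^ 2 ≤ f x := by
    simpa [hgz, hmin] using hsc.add_inner_add_le (hg zstar) x
  have htriangle : ‖A (g x) + zstar - x‖ ≤ ‖g x‖ + ‖x - zstar‖ := calc
    ‖A (g x) + zstar - x‖ ≤ ‖A (g x)‖ + ‖zstar - x‖ := by
      rw [add_sub_assoc]; exact norm_add_le _ _
    _ ≤ ‖g x‖ + ‖x - zstar‖ := by rw [norm_sub_rev]; gcongr; exact hA _
  have hdist : ‖x - zstar‖ ^ 2 ≤ 2 * μ⁻¹ * f x := by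
    rw [mul_right_comm, ← div_eq_mul_inv, le_div_iff₀ hμ]
    linarith
  nlinarith [norm_nonneg (A (g x) + zstar - x), sq_nonneg (‖g x‖ - ‖x - zstar‖)]

theorem skew_gradient_step_le {A : E → E} {μ ε : ℝ} {zstar : E} (hμ : 0 < μ) (hL : 0 < L)
    (hsc : StrongConvexOn univ μ f) (hg : ∀ w, HasGradientAt f (g w) w)
    (hLip : LipschitzWith L.toNNReal g) (hA : ∀ v, ⟪v, A v⟫ = 0) (hA' : ∀ v, ‖A v‖ ≤ ‖v‖)
    (hmin : f zstar = 0) (hnonneg : ∀ w, 0 ≤ f w)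
    (hε₀ : 0 ≤ ε) (hε : 2 * ε * (L ^ 2 + L / μ) ≤ 1) (x : E) :
    f (x + ε • (A (g x) + zstar - x)) ≤ (1 - ε * μ / L) * f x := by
  have hgz : g zstar = 0 :=
    IsLocalMin.hasGradientAt_eq_zero (.of_forall fun w => hmin ▸ hnonneg w) (hg zstar)
  have hupper : f x ≤ L / 2 * ‖x - zstar‖ ^ 2 := by
    simpa [hgz, hmin] using le_add_inner_add_of_lipschitzWith_gradient hL.le hg hLip zstar x
  set d := A (g x) + zstar - x with hd
  have hinner : ⟪g x, d⟫ ≤ -f x - μ / 2 * ‖x - zstar‖ ^ 2 := by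
    have hskew : ⟪g x, d⟫ = ⟪g x, zstar - x⟫ := by
      rw [hd, add_sub_assoc, inner_add_right, hA, zero_add]
    have := hsc.add_inner_add_le (hg x) zstar
    rw [hmin, norm_sub_rev] at this
    linarith
  have hquad : L / 2 * ‖ε • d‖ ^ 2 ≤ ε * f x := calc
    L / 2 * ‖ε • d‖ ^ 2 = L / 2 * ε ^ 2 * ‖d‖ ^ 2 := by
      rw [norm_smul, mul_pow, Real.norm_eq_abs, sq_abs]; ring
    _ ≤ L / 2 * ε ^ 2 * (4 * (L + μ⁻¹) * f x) := by
      gcongr; exact norm_skew_step_sq_le hμ hL hsc hg hLip hA' hmin hnonneg x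
    _ = ε * (2 * ε * (L ^ 2 + L / μ)) * f x := by ring
    _ ≤ ε * 1 * f x := by have := hnonneg x; gcongr
    _ = ε * f x := by ring
  have hrate : μ / L * f x ≤ μ / 2 * ‖x - zstar‖ ^ 2 := calc
    μ / L * f x ≤ μ / L * (L / 2 * ‖x - zstar‖ ^ 2) := by gcongr
    _ = μ / 2 * ‖x - zstar‖ ^ 2 := by field_simp
  calc f (x + ε • d) ≤ f x + ε * ⟪g x, d⟫ + L / 2 * ‖ε • d‖ ^ 2 := by
        simpa [real_inner_smul_right] using
          le_add_inner_add_of_lipschitzWith_gradient hL.le hg hLip x (x + ε • d)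
    _ ≤ f x + ε * (-f x - μ / 2 * ‖x - zstar‖ ^ 2) + ε * f x := by gcongr
    _ = f x - ε * (μ / 2 * ‖x - zstar‖ ^ 2) := by ring
    _ ≤ f x - ε * (μ / L * f x) := by gcongr
    _ = (1 - ε * μ / L) * f x := by ring

end

theorem mul_div_le_one_of_two_mul_le_one {L μ ε : ℝ} (hμ : 0 < μ) (hLμ : μ ≤ L) (hε₀ : 0 ≤ ε)
    (hε : 2 * ε * (L ^ 2 + L / μ) ≤ 1) : ε * μ / L ≤ 1 := by
  have hL : 0 < L := hμ.trans_le hLμ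
  calc ε * μ / L = ε * (μ / L) := by ring
    _ ≤ ε * (L / μ) := by gcongr
    _ ≤ 1 := by nlinarith [mul_nonneg hε₀ (sq_nonneg L)]

theorem inner_Jmap_eq_zero (n : ℕ) (v : EuclideanSpace ℝ (Fin n ⊕ Fin n)) :
    ⟪v, Jmap n v⟫ = 0 := by
  simp only [PiLp.inner_apply, RCLike.inner_apply, conj_trivial, Fintype.sum_sum_type]
  simp [Jmap, mul_comm]

theorem norm_Jmap (n : ℕ) (v : EuclideanSpace ℝ (Fin n ⊕ Fin n)) : ‖Jmap n v‖ = ‖v‖ := by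
  simp only [EuclideanSpace.norm_eq, Fintype.sum_sum_type]
  simp [Jmap, add_comm]

/-- For the explicit discretization `z^{k+1} = z^k + ε(J∇H(z^k) + z⋆ − z^k)` of
an `L`-smooth, `μ`-strongly convex Hamiltonian, with `2ε = (L² + L/μ)⁻¹`, one
has `H(z^{k+1}) ≤ (1 − ε·μ/L)·H(z^k)`, hence linear convergence
`H(z^k) ≤ (1 − ε·μ/L)^k·H(z^0)`. -/
theorem stmt9 (n : ℕ)
    (H : EuclideanSpace ℝ (Fin n ⊕ Fin n) → ℝ)
    (L μ : ℝ) (hμ : 0 < μ) (hLμ : μ ≤ L)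
    (hsc : StrongConvexOn Set.univ μ H)
    (hH : ∀ w, HasGradientAt H (gradient H w) w)
    (hLip : LipschitzWith (Real.toNNReal L) (fun w => gradient H w))
    (zstar : EuclideanSpace ℝ (Fin n ⊕ Fin n))
    (hmin : H zstar = 0) (hnonneg : ∀ w, 0 ≤ H w)
    (ε : ℝ) (hε : 2 * ε = (L ^ 2 + L / μ)⁻¹)
    (z : ℕ → EuclideanSpace ℝ (Fin n ⊕ Fin n))
    (hrec : ∀ k, z (k + 1) =
      z k + ε • (Jmap n (gradient H (z k)) + zstar - z k)) :
    (∀ k, H (z (k + 1)) ≤ (1 - ε * μ / L) * H (z k)) ∧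
      ∀ k, H (z k) ≤ (1 - ε * μ / L) ^ k * H (z 0) := by
  have hL : 0 < L := hμ.trans_le hLμ
  have hε₀ : 0 ≤ ε := by
    have : 0 < 2 * ε := hε ▸ inv_pos.2 (by positivity)
    linarith
  have hε' : 2 * ε * (L ^ 2 + L / μ) ≤ 1 := by rw [hε, inv_mul_cancel₀ (by positivity)]
  have hstep : ∀ k, H (z (k + 1)) ≤ (1 - ε * μ / L) * H (z k) := fun k => by
    rw [hrec k]
    exact skew_gradient_step_le hμ hL hsc hH hLip (inner_Jmap_eq_zero n)
      (fun v => (norm_Jmap n v).le) hmin hnonneg hε₀ hε' (z k)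
  have hrate : 0 ≤ 1 - ε * μ / L := sub_nonneg.2 (mul_div_le_one_of_two_mul_le_one hμ hLμ hε₀ hε')
  exact ⟨hstep, fun k => le_geom (u := fun k => H (z k)) hrate k fun i _ => hstep i⟩
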